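/- arXiv:2502.07249 — 4 statements merged into one kernel-verified Lean document; each statement's English description precedes it below -/
import Mathlib

section
/- Let n ≥ 2 and let 0 < d < n be an even integer. Let U be a nonempty bounded open subset of ℝⁿ. Then there exists a compactly supported smooth function f : ℝⁿ → ℝ that is not identically zero, such that f vanishes on U, and for every d-dimensional affine subspace ξ of ℝⁿ with ξ ∩ U ≠ ∅, the integral of f over ξ with respect to the d-dimensional Hausdorff measure equals 0. -/
/-!
Write `d = 2k`, put `U` inside a ball `B(0, R)` and take `f x = H⁽ᵏ⁾(‖x‖²)` for a nonzero bump
`H` supported in `(R², ∞)`. A `d`-plane `ξ` meeting `U` lies at squared distance `c ≤ R²` from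
the origin, so by Pythagoras and polar coordinates in `ξ`,
`∫_ξ f = C · ∫₀^∞ r^(2k-1) H⁽ᵏ⁾(r² + c) dr`. Because `d` is even, the weight `r^(2k-1)` is `r`
times a polynomial in `r²`, and integrating by parts `k - 1` times in `s = r²` turns this
integral into a multiple of `H(c) = 0`.
-/

open MeasureTheory Set Filter Topology Module Function
open scoped ContDiff

theorem HasCompactSupport.comp_of_tendsto_cocompact_atTop {X M : Type*} [TopologicalSpace X]
    [T2Space X] [Zero M] {g : ℝ → M} (hg : HasCompactSupport g) {φ : X → ℝ}
    (hφ : Tendsto φ (cocompact X) atTop) : HasCompactSupport (g ∘ φ) := by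
  rw [hasCompactSupport_iff_eventuallyEq, coclosedCompact_eq_cocompact] at hg ⊢
  exact hφ.eventually (hg.filter_mono atTop_le_cocompact)

theorem tendsto_norm_sq_add_const_cocompact_atTop {E : Type*} [NormedAddCommGroup E]
    [ProperSpace E] (c : ℝ) : Tendsto (fun x : E => ‖x‖ ^ 2 + c) (cocompact E) atTop :=
  tendsto_atTop_add_const_right _ c
    ((tendsto_pow_atTop two_ne_zero).comp tendsto_norm_cocompact_atTop)

section IteratedDeriv

variable {H : ℝ → ℝ}

theorem support_iteratedDeriv_subset (k : ℕ) : support (iteratedDeriv k H) ⊆ tsupport H :=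
  fun x hx => support_iteratedFDeriv_subset (𝕜 := ℝ) k <| mem_support.2 fun h =>
    hx (by simp [iteratedDeriv_eq_iteratedFDeriv, h])

theorem HasCompactSupport.iteratedDeriv (hs : HasCompactSupport H) (k : ℕ) :
    HasCompactSupport (iteratedDeriv k H) :=
  hs.mono' (support_iteratedDeriv_subset k)

theorem ContDiff.hasDerivAt_iteratedDeriv (hH : ContDiff ℝ ∞ H) (k : ℕ) (x : ℝ) :
    HasDerivAt (iteratedDeriv k H) (iteratedDeriv (k + 1) H x) x := by
  rw [iteratedDeriv_succ]
  exact (hH.differentiable_iteratedDeriv k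
    (by exact_mod_cast WithTop.coe_lt_top _)).differentiableAt.hasDerivAt

theorem HasCompactSupport.eq_zero_of_deriv_eq_zero (hs : HasCompactSupport H)
    (hd : Differentiable ℝ H) (h : deriv H = 0) : H = 0 := by
  obtain ⟨y, hy⟩ : ∃ y, y ∉ tsupport H := by
    simpa [eq_univ_iff_forall] using hs.isCompact.ne_univ
  funext x
  rw [is_const_of_deriv_eq_zero hd (congrFun h) x y, image_eq_zero_of_notMem_tsupport hy]
  rfl

theorem HasCompactSupport.iteratedDeriv_ne_zero (hs : HasCompactSupport H) (hH : ContDiff ℝ ∞ H)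
    (h0 : H ≠ 0) (k : ℕ) : _root_.iteratedDeriv k H ≠ 0 := by
  induction k with
  | zero => simpa using h0
  | succ k ih =>
    rw [iteratedDeriv_succ]
    exact fun h => ih <| (hs.iteratedDeriv k).eq_zero_of_deriv_eq_zero
      (fun x => (hH.hasDerivAt_iteratedDeriv k x).differentiableAt) h

/-- A primitive of `s ↦ (s - c) ^ k * H⁽ᵏ⁺¹⁾ s`, obtained by integrating by parts `k` times. -/
noncomputable def momentPrimitive (H : ℝ → ℝ) (c : ℝ) : ℕ → ℝ → ℝ
  | 0 => H
  | k + 1 => fun s =>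
      (s - c) ^ (k + 1) * iteratedDeriv (k + 1) H s - (k + 1) * momentPrimitive H c k s

theorem hasDerivAt_momentPrimitive (hH : ContDiff ℝ ∞ H) (c : ℝ) (k : ℕ) (s : ℝ) :
    HasDerivAt (momentPrimitive H c k) ((s - c) ^ k * iteratedDeriv (k + 1) H s) s := by
  induction k with
  | zero => simpa [momentPrimitive] using hH.hasDerivAt_iteratedDeriv 0 s
  | succ k ih =>
    refine ((((hasDerivAt_id s).sub_const c).fun_pow (k + 1)).mul
      (hH.hasDerivAt_iteratedDeriv (k + 1) s)).sub (ih.const_mul ((k : ℝ) + 1)) |>.congr_deriv ?_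
    simp only [id, add_tsub_cancel_right, Nat.cast_add, Nat.cast_one]
    ring

theorem momentPrimitive_self {c : ℝ} (hc : H c = 0) (k : ℕ) : momentPrimitive H c k c = 0 := by
  induction k with
  | zero => exact hc
  | succ k ih => simp [momentPrimitive, ih]

theorem HasCompactSupport.momentPrimitive (hs : HasCompactSupport H) (c : ℝ) (k : ℕ) :
    HasCompactSupport (momentPrimitive H c k) := by
  induction k with
  | zero => exact hs
  | succ k ih =>
    exact ((hs.iteratedDeriv (k + 1)).mul_left (f := fun s => (s - c) ^ (k + 1))).sub
      (ih.mul_left (f := fun _ => (k : ℝ) + 1))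

theorem integral_Ioi_pow_mul_iteratedDeriv_sq_add_eq_zero (hH : ContDiff ℝ ∞ H)
    (hs : HasCompactSupport H) {c : ℝ} (hc : H c = 0) (k : ℕ) :
    ∫ r in Ioi (0 : ℝ), r ^ (2 * k + 1) * iteratedDeriv (k + 1) H (r ^ 2 + c) = 0 := by
  have hsq : Tendsto (fun r : ℝ => r ^ 2 + c) (cocompact ℝ) atTop := by
    simpa using tendsto_norm_sq_add_const_cocompact_atTop (E := ℝ) c
  have hderiv (r : ℝ) : HasDerivAt (fun r => momentPrimitive H c k (r ^ 2 + c))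
      (2 * (r ^ (2 * k + 1) * iteratedDeriv (k + 1) H (r ^ 2 + c))) r := by
    refine (hasDerivAt_momentPrimitive hH c k _).comp r ((hasDerivAt_pow 2 r).add_const c)
      |>.congr_deriv ?_
    simp only [add_sub_cancel_right, Nat.cast_ofNat]
    ring
  have hcont : Continuous (iteratedDeriv (k + 1) H) :=
    hH.continuous_iteratedDeriv (k + 1) (by exact_mod_cast le_top)
  have hint : Integrable fun r => 2 * (r ^ (2 * k + 1) * iteratedDeriv (k + 1) H (r ^ 2 + c)) :=
    Continuous.integrable_of_hasCompactSupport (by fun_prop)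
      ((((hs.iteratedDeriv (k + 1)).comp_of_tendsto_cocompact_atTop hsq).mul_left).mul_left)
  have hlim : Tendsto (fun r => momentPrimitive H c k (r ^ 2 + c)) atTop (𝓝 0) :=
    (((hs.momentPrimitive c k).comp_of_tendsto_cocompact_atTop hsq).is_zero_at_infty).mono_left
      atTop_le_cocompact
  have hFTC := integral_Ioi_of_hasDerivAt_of_tendsto' (a := 0) (fun r _ => hderiv r)
    hint.integrableOn hlim
  simpa [integral_const_mul, momentPrimitive_self hc] using hFTC

end IteratedDeriv

theorem integral_iteratedDeriv_norm_sq_add_eq_zero {E : Type*} [NormedAddCommGroup E]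
    [NormedSpace ℝ E] [FiniteDimensional ℝ E] [MeasurableSpace E] [BorelSpace E]
    (μ : Measure E) [μ.IsAddHaarMeasure] {k : ℕ} (hE : finrank ℝ E = 2 * k) {H : ℝ → ℝ}
    (hH : ContDiff ℝ ∞ H) (hs : HasCompactSupport H) {c : ℝ} (hc : H c = 0) :
    ∫ z, iteratedDeriv k H (‖z‖ ^ 2 + c) ∂μ = 0 := by
  cases k with
  | zero =>
    have : Subsingleton E := finrank_zero_iff.mp hE
    simp [Subsingleton.elim _ (0 : E), hc]
  | succ k =>
    have : Nontrivial E := Module.nontrivial_of_finrank_pos (R := ℝ) (by omega)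
    rw [integral_fun_norm_addHaar μ fun y => iteratedDeriv (k + 1) H (y ^ 2 + c), hE,
      show 2 * (k + 1) - 1 = 2 * k + 1 by omega]
    simp [integral_Ioi_pow_mul_iteratedDeriv_sq_add_eq_zero hH hs hc k]

open EuclideanGeometry in
theorem setIntegral_affineSubspace_dist_sq_eq {V P : Type*} [NormedAddCommGroup V]
    [InnerProductSpace ℝ V] [MeasurableSpace V] [BorelSpace V] [MetricSpace P]
    [NormedAddTorsor V P] [MeasurableSpace P] [BorelSpace P]
    (ξ : AffineSubspace ℝ P) [Nonempty ξ] [CompleteSpace ξ.direction]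
    (p : P) (φ : ℝ → ℝ) {d : ℝ} (hd : 0 ≤ d) :
    ∫ x in (ξ : Set P), φ (dist x p ^ 2) ∂μH[d] =
      ∫ v : ξ.direction, φ (‖v‖ ^ 2 + dist p (orthogonalProjection ξ p) ^ 2) ∂μH[d] := by
  set q := (orthogonalProjection ξ p : P)
  let e : ξ.direction → P := fun v => (v : V) +ᵥ q
  have he : Isometry e := Isometry.of_dist_eq fun v w => by
    simp only [e, dist_vadd_cancel_right]
    rfl
  have hrange : range e = ξ := by
    ext x
    refine ⟨?_, fun hx => ⟨⟨x -ᵥ q, ?_⟩, vsub_vadd x q⟩⟩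
    · rintro ⟨v, rfl⟩
      exact AffineSubspace.vadd_mem_of_mem_direction v.2 (orthogonalProjection_mem p)
    · exact AffineSubspace.vsub_mem_direction hx (orthogonalProjection_mem p)
  rw [← hrange, ← he.map_hausdorffMeasure (Or.inl hd),
    he.isClosedEmbedding.measurableEmbedding.integral_map]
  congr 1 with v
  have hv : e v ∈ ξ := by rw [← SetLike.mem_coe, ← hrange]; exact mem_range_self v
  have := dist_sq_eq_dist_orthogonalProjection_sq_add_dist_orthogonalProjection_sq p hv
  rw [← sq, ← sq, ← sq, dist_vadd_left] at this
  rw [this, Submodule.coe_norm]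

open EuclideanGeometry in
theorem setIntegral_affineSubspace_iteratedDeriv_dist_sq_eq_zero {V P : Type*}
    [NormedAddCommGroup V] [InnerProductSpace ℝ V] [FiniteDimensional ℝ V] [MeasurableSpace V]
    [BorelSpace V] [MetricSpace P] [NormedAddTorsor V P] [MeasurableSpace P] [BorelSpace P]
    (ξ : AffineSubspace ℝ P) [Nonempty ξ] (p : P) {k : ℕ}
    (hξ : finrank ℝ ξ.direction = 2 * k) {H : ℝ → ℝ} (hH : ContDiff ℝ ∞ H)
    (hs : HasCompactSupport H) (hc : H (dist p (orthogonalProjection ξ p) ^ 2) = 0) :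
    ∫ x in (ξ : Set P), iteratedDeriv k H (dist x p ^ 2) ∂μH[((2 * k : ℕ) : ℝ)] = 0 := by
  have : (μH[((2 * k : ℕ) : ℝ)] : Measure ξ.direction).IsAddHaarMeasure := hξ ▸ inferInstance
  rw [setIntegral_affineSubspace_dist_sq_eq ξ p _ (Nat.cast_nonneg _)]
  exact integral_iteratedDeriv_norm_sq_add_eq_zero _ hξ hH hs hc

theorem EuclideanGeometry.dist_orthogonalProjection_le {V P : Type*} [NormedAddCommGroup V]
    [InnerProductSpace ℝ V] [MetricSpace P] [NormedAddTorsor V P] {s : AffineSubspace ℝ P}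
    [Nonempty s] [s.direction.HasOrthogonalProjection] (p : P) {q : P} (hq : q ∈ s) :
    dist p (orthogonalProjection s p) ≤ dist q p := by
  have := dist_sq_eq_dist_orthogonalProjection_sq_add_dist_orthogonalProjection_sq p hq
  nlinarith [dist_nonneg (x := q) (y := p), dist_nonneg (x := p) (y := orthogonalProjection s p),
    mul_self_nonneg (dist q (orthogonalProjection s p))]

theorem lack_of_ucp_dplane_transform_even_general
    (n d : ℕ) (hdn : d < n) (hdeven : Even d)
    (U : Set (EuclideanSpace ℝ (Fin n))) (hUbd : Bornology.IsBounded U) :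
    ∃ f : EuclideanSpace ℝ (Fin n) → ℝ,
      ContDiff ℝ (⊤ : ℕ∞) f ∧ HasCompactSupport f ∧ f ≠ 0 ∧
      (∀ x ∈ U, f x = 0) ∧
      ∀ ξ : AffineSubspace ℝ (EuclideanSpace ℝ (Fin n)),
        Module.finrank ℝ ξ.direction = d →
        ((ξ : Set (EuclideanSpace ℝ (Fin n))) ∩ U).Nonempty →
        ∫ x in (ξ : Set (EuclideanSpace ℝ (Fin n))), f x ∂ μH[(d : ℝ)] = 0 := by
  obtain ⟨k, rfl⟩ : ∃ k, d = 2 * k := hdeven.two_dvd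
  obtain ⟨R, hUR⟩ := hUbd.subset_ball 0
  have hU {x} (hx : x ∈ U) : ‖x‖ ^ 2 ≤ R ^ 2 :=
    pow_le_pow_left₀ (norm_nonneg x) (mem_ball_zero_iff.1 (hUR hx)).le 2
  obtain ⟨H, hHR, hHcs, hH, -, hH1⟩ :=
    exists_contDiff_tsupport_subset (n := ⊤) (Ioi_mem_nhds (lt_add_one (R ^ 2)))
  have hH_le {t} (ht : t ≤ R ^ 2) : H t = 0 :=
    image_eq_zero_of_notMem_tsupport fun h => (hHR h).not_ge ht
  have hg_le {t} (ht : t ≤ R ^ 2) : iteratedDeriv k H t = 0 :=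
    notMem_support.1 fun h => (hHR (support_iteratedDeriv_subset k h)).not_ge ht
  refine ⟨fun x => iteratedDeriv k H (‖x‖ ^ 2), ?_, ?_, ?_, fun x hx => hg_le (hU hx), ?_⟩
  · rw [iteratedDeriv_eq_iterate]
    exact (hH.iterate_deriv k).comp (contDiff_norm_sq ℝ)
  · exact (hHcs.iteratedDeriv k).comp_of_tendsto_cocompact_atTop
      (by simpa using tendsto_norm_sq_add_const_cocompact_atTop (E := EuclideanSpace ℝ (Fin n)) 0)
  · obtain ⟨u, hu⟩ := Function.ne_iff.1 <|
      hHcs.iteratedDeriv_ne_zero hH (fun h => by simp [h] at hH1) k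
    have hu0 : 0 ≤ u := le_of_not_gt fun h => hu (hg_le (h.le.trans (sq_nonneg R)))
    have : Nonempty (Fin n) := ⟨⟨0, by omega⟩⟩
    obtain ⟨x, hx⟩ := exists_norm_eq (EuclideanSpace ℝ (Fin n)) (Real.sqrt_nonneg u)
    exact fun h => hu (by simpa [hx, Real.sq_sqrt hu0] using congrFun h x)
  · rintro ξ hξ ⟨q, hqξ, hqU⟩
    have : Nonempty ξ := ⟨⟨q, hqξ⟩⟩
    have hc : dist 0 (EuclideanGeometry.orthogonalProjection ξ 0 : EuclideanSpace ℝ (Fin n)) ^ 2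
        ≤ R ^ 2 :=
      (pow_le_pow_left₀ dist_nonneg (EuclideanGeometry.dist_orthogonalProjection_le 0 hqξ) 2).trans
        (by simpa using hU hqU)
    simpa using setIntegral_affineSubspace_iteratedDeriv_dist_sq_eq_zero ξ 0 hξ hH hHcs (hH_le hc)

/-- **Lack of UCP for the `d`-plane transform, `d` even.**
If `0 < d < n` with `d` even and `U ⊆ ℝⁿ` is a nonempty bounded open set, then there is a
nonzero compactly supported smooth function `f` vanishing on `U` whose integral over every
`d`-dimensional affine subspace meeting `U` (w.r.t. `d`-dimensional Hausdorff measure) is `0`. -/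
theorem lack_of_ucp_dplane_transform_even
    (n d : ℕ) (hn : 2 ≤ n) (hd0 : 0 < d) (hdn : d < n) (hdeven : Even d)
    (U : Set (EuclideanSpace ℝ (Fin n))) (hUne : U.Nonempty)
    (hUbd : Bornology.IsBounded U) (hUopen : IsOpen U) :
    ∃ f : EuclideanSpace ℝ (Fin n) → ℝ,
      ContDiff ℝ (⊤ : ℕ∞) f ∧ HasCompactSupport f ∧ f ≠ 0 ∧
      (∀ x ∈ U, f x = 0) ∧
      ∀ ξ : AffineSubspace ℝ (EuclideanSpace ℝ (Fin n)),
        Module.finrank ℝ ξ.direction = d →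
        ((ξ : Set (EuclideanSpace ℝ (Fin n))) ∩ U).Nonempty →
        ∫ x in (ξ : Set (EuclideanSpace ℝ (Fin n))), f x ∂ μH[(d : ℝ)] = 0 :=
  lack_of_ucp_dplane_transform_even_general n d hdn hdeven U hUbd
end

section
/- Let n ≥ 2 and let 0 < d < n be an odd integer. For every m ≥ 0, every k ≥ 0, and all indices i₁, …, i_m ∈ {1, …, n}, the function x ↦ x_{i₁} x_{i₂} ⋯ x_{i_m} / |x|^{2m + 2k + n − d}, defined on ℝⁿ ∖ {0}, lies in the ℝ-linear span of the set of functions on ℝⁿ ∖ {0} obtained by applying a finite sequence of first-order partial derivatives ∂_{j₁} ∂_{j₂} ⋯ ∂_{j_r} (r ≥ 0, each j_i ∈ {1, …, n}) to the function x ↦ |x|^{−(n−d)}. -/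
open MeasureTheory

/-- The partial derivative `∂ⱼ g` of a function `g : ℝⁿ → ℝ`. -/
noncomputable def partialDeriv' (n : ℕ) (j : Fin n)
    (g : EuclideanSpace ℝ (Fin n) → ℝ) : EuclideanSpace ℝ (Fin n) → ℝ :=
  fun x => fderiv ℝ g x (EuclideanSpace.single j 1)

/-- Iterated partial derivatives `∂_{j₁} ∂_{j₂} ⋯ ∂_{j_r} g`, given by a list of coordinate
directions. -/
noncomputable def iterPartialDeriv (n : ℕ) :
    List (Fin n) → (EuclideanSpace ℝ (Fin n) → ℝ) → EuclideanSpace ℝ (Fin n) → ℝ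
  | [], g => g
  | j :: L, g => iterPartialDeriv n L (partialDeriv' n j g)

/-!
Let `W` be the space of functions on `ℝⁿ ∖ {0}` spanned by the iterated partial derivatives of
`|x|^(d-n)`; it is stable under every `∂ⱼ`. For a homogeneous polynomial `p` of degree `m ≤ s`
we show `p(x) |x|^(d-n-2s) ∈ W` by induction on `s`, using three identities off the origin:

* `∂ⱼ (q |x|^a) = (∂ⱼ q) |x|^a + a xⱼ q |x|^(a-2)`, so `xⱼ q |x|^(a-2) ∈ W` as soon as `a ≠ 0`
  and `q |x|^a, (∂ⱼ q) |x|^a ∈ W`; here `a = d - n - 2(s-1) < 0` because `d < n`;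
* Euler's identity `∑ⱼ xⱼ ∂ⱼ p = m p` writes `p` in terms of such products `xⱼ q`;
* `∑ⱼ ∂ⱼ (xⱼ |x|^b) = (n + b) |x|^b` handles `m = 0`; here `n + b = d - 2s ≠ 0` because `d` is odd.
-/

open MvPolynomial Set
open scoped ContDiff

theorem hasFDerivAt_norm_rpow_of_ne_zero {F : Type*} [NormedAddCommGroup F]
    [InnerProductSpace ℝ F] (a : ℝ) {x : F} (hx : x ≠ 0) :
    HasFDerivAt (fun y : F => ‖y‖ ^ a) ((a * ‖x‖ ^ (a - 2)) • innerSL ℝ x) x := by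
  apply HasStrictFDerivAt.hasFDerivAt
  convert! (hasStrictFDerivAt_norm_sq x).rpow_const (p := a / 2) (by simp [hx]) using 0
  simp_rw [← Real.rpow_natCast_mul (norm_nonneg _), ← Nat.cast_smul_eq_nsmul ℝ, smul_smul]
  ring_nf

variable {n : ℕ}

local notation "ℝⁿ" => EuclideanSpace ℝ (Fin n)

theorem MvPolynomial.hasFDerivAt_eval (p : MvPolynomial (Fin n) ℝ) (x : ℝⁿ) :
    HasFDerivAt (fun y : ℝⁿ => eval (⇑y) p)
      (∑ i, eval (⇑x) (pderiv i p) • EuclideanSpace.proj (𝕜 := ℝ) i) x := by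
  induction p using MvPolynomial.induction_on with
  | C a => simpa using hasFDerivAt_const a x
  | add p q hp hq =>
    simp only [map_add, add_smul, Finset.sum_add_distrib]
    exact hp.add hq
  | mul_X p i hp =>
    classical
    simp only [map_mul, eval_X]
    refine (hp.fun_mul (EuclideanSpace.proj (𝕜 := ℝ) i).hasFDerivAt).congr_fderiv
      (ContinuousLinearMap.ext fun v => ?_)
    simp [Pi.single_apply, apply_ite (eval _), mul_add, Finset.sum_add_distrib, Finset.mul_sum,
      mul_left_comm, mul_comm]

theorem partialDeriv'_eval_mul_norm_rpow (p : MvPolynomial (Fin n) ℝ) (a : ℝ) (j : Fin n)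
    {x : ℝⁿ} (hx : x ≠ 0) :
    partialDeriv' n j (fun y => eval (⇑y) p * ‖y‖ ^ a) x =
      eval (⇑x) (pderiv j p) * ‖x‖ ^ a + a * (x j * eval (⇑x) p) * ‖x‖ ^ (a - 2) := by
  rw [partialDeriv',
    ((hasFDerivAt_eval p x).fun_mul (hasFDerivAt_norm_rpow_of_ne_zero a hx)).fderiv]
  simp [EuclideanSpace.inner_single_right]
  ring

theorem contDiffOn_norm_rpow (a : ℝ) : ContDiffOn ℝ ∞ (fun x : ℝⁿ => ‖x‖ ^ a) {0}ᶜ :=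
  fun _ hx => ((contDiffAt_norm ℝ hx).rpow_const_of_ne (norm_ne_zero_iff.2 hx)).contDiffWithinAt

section DerivSpan

variable {U : Set (EuclideanSpace ℝ (Fin n))} {g : EuclideanSpace ℝ (Fin n) → ℝ}

theorem iterPartialDeriv_append_singleton (L : List (Fin n)) (j : Fin n) :
    iterPartialDeriv n (L ++ [j]) g = partialDeriv' n j (iterPartialDeriv n L g) := by
  induction L generalizing g with
  | nil => rfl
  | cons i L ih => exact ih

theorem ContDiffOn.partialDeriv' (hU : IsOpen U) (hg : ContDiffOn ℝ ∞ g U) (j : Fin n) :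
    ContDiffOn ℝ ∞ (partialDeriv' n j g) U :=
  (hg.fderiv_of_isOpen hU le_rfl).clm_apply contDiffOn_const

theorem ContDiffOn.iterPartialDeriv (hU : IsOpen U) (hg : ContDiffOn ℝ ∞ g U)
    (L : List (Fin n)) : ContDiffOn ℝ ∞ (iterPartialDeriv n L g) U := by
  induction L generalizing g with
  | nil => exact hg
  | cons j L ih => exact ih (hg.partialDeriv' hU j)

theorem Set.EqOn.partialDeriv' {F G : ℝⁿ → ℝ} (hU : IsOpen U) (h : EqOn F G U) (j : Fin n) :
    EqOn (partialDeriv' n j F) (partialDeriv' n j G) U := fun x hx => by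
  simp only [_root_.partialDeriv', (h.eventuallyEq_of_mem (hU.mem_nhds hx)).fderiv_eq]

variable (U g) in
/-- Functions are kept on all of `ℝⁿ` but compared only on `U`, so that `partialDeriv'` applies
to them. -/
def derivSpan : Submodule ℝ (ℝⁿ → ℝ) :=
  ((Submodule.span ℝ (range fun L => iterPartialDeriv n L g)).map
    (LinearMap.funLeft ℝ ℝ ((↑) : U → ℝⁿ))).comap (LinearMap.funLeft ℝ ℝ (↑))

theorem mem_derivSpan_iff {F : ℝⁿ → ℝ} : F ∈ derivSpan U g ↔
    (fun x : U => F x) ∈ Submodule.span ℝ {h | ∃ L, h = fun x : U => iterPartialDeriv n L g x} := by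
  have hgen : LinearMap.funLeft ℝ ℝ ((↑) : U → ℝⁿ) '' range (fun L => iterPartialDeriv n L g) =
      {h | ∃ L, h = fun x : U => iterPartialDeriv n L g x} := by
    ext h
    simp [eq_comm, LinearMap.funLeft, Function.comp_def]
  rw [derivSpan, Submodule.mem_comap, Submodule.map_span, hgen]
  rfl

theorem mem_derivSpan_of_eqOn {F G : ℝⁿ → ℝ} (hF : F ∈ derivSpan U g) (h : EqOn F G U) :
    G ∈ derivSpan U g := by
  have : F ∘ ((↑) : U → ℝⁿ) = G ∘ (↑) := funext fun x => h x.2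
  simpa [derivSpan, Submodule.mem_comap, LinearMap.funLeft, this] using hF

theorem iterPartialDeriv_mem_derivSpan (L : List (Fin n)) :
    iterPartialDeriv n L g ∈ derivSpan U g :=
  Submodule.mem_comap.2 <| Submodule.mem_map_of_mem <| Submodule.subset_span ⟨L, rfl⟩

theorem contDiffOn_of_mem_span (hU : IsOpen U) (hg : ContDiffOn ℝ ∞ g U) {G : ℝⁿ → ℝ}
    (hG : G ∈ Submodule.span ℝ (range fun L => iterPartialDeriv n L g)) :
    ContDiffOn ℝ ∞ G U := by
  induction hG using Submodule.span_induction with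
  | mem _ h => obtain ⟨L, rfl⟩ := h; exact hg.iterPartialDeriv hU L
  | zero => exact contDiffOn_const
  | add _ _ _ _ h₁ h₂ => exact h₁.add h₂
  | smul c _ _ h => exact h.const_smul c

theorem partialDeriv'_mem_derivSpan_of_mem_span (hU : IsOpen U) (hg : ContDiffOn ℝ ∞ g U)
    (j : Fin n) {G : ℝⁿ → ℝ}
    (hG : G ∈ Submodule.span ℝ (range fun L => iterPartialDeriv n L g)) :
    partialDeriv' n j G ∈ derivSpan U g := by
  have hdiff : ∀ {G}, G ∈ Submodule.span ℝ (range fun L => iterPartialDeriv n L g) →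
      ∀ x ∈ U, DifferentiableAt ℝ G x := fun hG x hx =>
    ((contDiffOn_of_mem_span hU hg hG).differentiableOn (by simp)).differentiableAt
      (hU.mem_nhds hx)
  induction hG using Submodule.span_induction with
  | mem _ h =>
    obtain ⟨L, rfl⟩ := h
    rw [← iterPartialDeriv_append_singleton]
    exact iterPartialDeriv_mem_derivSpan _
  | zero =>
    convert (derivSpan U g).zero_mem
    ext
    simp [_root_.partialDeriv', fderiv_zero]
  | add G₁ G₂ hG₁ hG₂ h₁ h₂ =>
    refine mem_derivSpan_of_eqOn (add_mem h₁ h₂) fun x hx => ?_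
    simp [_root_.partialDeriv', fderiv_add (hdiff hG₁ x hx) (hdiff hG₂ x hx)]
  | smul c G hG h =>
    refine mem_derivSpan_of_eqOn ((derivSpan U g).smul_mem c h) fun x hx => ?_
    simp [_root_.partialDeriv', fderiv_const_smul (hdiff hG x hx)]

theorem partialDeriv'_mem_derivSpan (hU : IsOpen U) (hg : ContDiffOn ℝ ∞ g U) (j : Fin n)
    {F : ℝⁿ → ℝ} (hF : F ∈ derivSpan U g) : partialDeriv' n j F ∈ derivSpan U g := by
  obtain ⟨G, hG, hGF⟩ := Submodule.mem_comap.1 hF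
  have hFG : EqOn F G U := fun x hx => (congrFun hGF ⟨x, hx⟩).symm
  exact mem_derivSpan_of_eqOn (partialDeriv'_mem_derivSpan_of_mem_span hU hg j hG)
    (hFG.partialDeriv' hU j).symm

theorem eval_mul_mem_derivSpan_of_isHomogeneous_zero {p : MvPolynomial (Fin n) ℝ} {b : ℝ}
    (hp : p.IsHomogeneous 0) (h : (fun x : ℝⁿ => ‖x‖ ^ b) ∈ derivSpan U g) :
    (fun x : ℝⁿ => eval (⇑x) p * ‖x‖ ^ b) ∈ derivSpan U g := by
  rw [← totalDegree_zero_iff_isHomogeneous, totalDegree_eq_zero_iff_eq_C] at hp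
  rw [hp]
  simp only [eval_C]
  exact (derivSpan U g).smul_mem (coeff 0 p) h

end DerivSpan

section PuncturedSpace

variable {g : EuclideanSpace ℝ (Fin n) → ℝ}

theorem X_mul_eval_mul_norm_rpow_mem_derivSpan (hg : ContDiffOn ℝ ∞ g {0}ᶜ)
    {q : MvPolynomial (Fin n) ℝ} {a : ℝ} (ha : a ≠ 0) (j : Fin n)
    (hq : (fun x : ℝⁿ => eval (⇑x) q * ‖x‖ ^ a) ∈ derivSpan {0}ᶜ g)
    (hq' : (fun x : ℝⁿ => eval (⇑x) (pderiv j q) * ‖x‖ ^ a) ∈ derivSpan {0}ᶜ g) :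
    (fun x : ℝⁿ => eval (⇑x) (X j * q) * ‖x‖ ^ (a - 2)) ∈ derivSpan {0}ᶜ g := by
  have hD := partialDeriv'_mem_derivSpan isOpen_compl_singleton hg j hq
  refine mem_derivSpan_of_eqOn ((derivSpan _ g).smul_mem a⁻¹ (sub_mem hD hq')) fun x hx => ?_
  simp [partialDeriv'_eval_mul_norm_rpow q a j hx]
  field_simp

theorem eval_mul_norm_rpow_mem_derivSpan_of_isHomogeneous_succ (hg : ContDiffOn ℝ ∞ g {0}ᶜ)
    {p : MvPolynomial (Fin n) ℝ} {m : ℕ} {a : ℝ} (ha : a ≠ 0) (hp : p.IsHomogeneous (m + 1))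
    (hm : ∀ q : MvPolynomial (Fin n) ℝ, q.IsHomogeneous m →
      (fun x : ℝⁿ => eval (⇑x) q * ‖x‖ ^ a) ∈ derivSpan {0}ᶜ g)
    (hm' : ∀ q : MvPolynomial (Fin n) ℝ, q.IsHomogeneous (m - 1) →
      (fun x : ℝⁿ => eval (⇑x) q * ‖x‖ ^ a) ∈ derivSpan {0}ᶜ g) :
    (fun x : ℝⁿ => eval (⇑x) p * ‖x‖ ^ (a - 2)) ∈ derivSpan {0}ᶜ g := by
  have hsum : ∑ j, (fun x : ℝⁿ => eval (⇑x) (X j * pderiv j p) * ‖x‖ ^ (a - 2)) ∈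
      derivSpan {0}ᶜ g :=
    Submodule.sum_mem _ fun j _ => X_mul_eval_mul_norm_rpow_mem_derivSpan hg ha j
      (hm _ hp.pderiv) (hm' _ hp.pderiv.pderiv)
  convert (derivSpan {0}ᶜ g).smul_mem ((m : ℝ) + 1)⁻¹ hsum using 1
  ext x
  have hEuler := congrArg (eval (⇑x)) hp.sum_X_mul_pderiv
  simp only [map_sum, map_mul, nsmul_eq_mul, Nat.cast_succ, map_add, map_one, map_natCast]
    at hEuler
  simp only [Pi.smul_apply, Finset.sum_apply, map_mul, ← Finset.sum_mul, hEuler, smul_eq_mul]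
  field_simp

theorem norm_rpow_mem_derivSpan_of_coord_mul (hg : ContDiffOn ℝ ∞ g {0}ᶜ) {b : ℝ}
    (hb : (n : ℝ) + b ≠ 0)
    (h : ∀ j, (fun x : ℝⁿ => eval (⇑x) (X j) * ‖x‖ ^ b) ∈ derivSpan {0}ᶜ g) :
    (fun x : ℝⁿ => ‖x‖ ^ b) ∈ derivSpan {0}ᶜ g := by
  have hdiv : ∑ j, partialDeriv' n j (fun x : ℝⁿ => eval (⇑x) (X j) * ‖x‖ ^ b) ∈
      derivSpan {0}ᶜ g :=
    Submodule.sum_mem _ fun j _ => partialDeriv'_mem_derivSpan isOpen_compl_singleton hg j (h j)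
  refine mem_derivSpan_of_eqOn ((derivSpan _ g).smul_mem ((n : ℝ) + b)⁻¹ hdiv) fun x hx => ?_
  have hx' : 0 < ‖x‖ := norm_pos_iff.2 hx
  have hj : ∀ j, partialDeriv' n j (fun y : ℝⁿ => eval (⇑y) (X j) * ‖y‖ ^ b) x =
      ‖x‖ ^ b + b * ‖x j‖ ^ 2 * ‖x‖ ^ (b - 2) := fun j => by
    rw [partialDeriv'_eval_mul_norm_rpow _ b j hx]
    simp [sq]
  simp only [Pi.smul_apply, Finset.sum_apply, smul_eq_mul, hj, Finset.sum_add_distrib,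
    ← Finset.sum_mul, ← Finset.mul_sum, ← EuclideanSpace.norm_sq_eq, Finset.sum_const,
    Finset.card_univ, Fintype.card_fin, nsmul_eq_mul, Real.rpow_sub hx', Real.rpow_two]
  field_simp

end PuncturedSpace

theorem eval_mul_norm_rpow_mem_derivSpan_riesz {d : ℕ} (hdn : d < n) (hd : Odd d) (s : ℕ) :
    ∀ m ≤ s, ∀ p : MvPolynomial (Fin n) ℝ, p.IsHomogeneous m →
      (fun x : ℝⁿ => eval (⇑x) p * ‖x‖ ^ ((d : ℝ) - n - 2 * s)) ∈
        derivSpan {0}ᶜ (fun y : ℝⁿ => ‖y‖ ^ (-((n : ℝ) - d))) := by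
  have hg := contDiffOn_norm_rpow (n := n) (-((n : ℝ) - d))
  induction s with
  | zero =>
    intro m hm p hp
    obtain rfl : m = 0 := by omega
    refine eval_mul_mem_derivSpan_of_isHomogeneous_zero hp ?_
    convert iterPartialDeriv_mem_derivSpan (U := {0}ᶜ) [] using 2
    simp only [iterPartialDeriv]
    push_cast
    ring_nf
  | succ s ih =>
    have ha : (d : ℝ) - n - 2 * s ≠ 0 := by
      have : (d : ℝ) < n := by exact_mod_cast hdn
      have : (0 : ℝ) ≤ s := s.cast_nonneg
      intro h
      linarith
    have hb : (n : ℝ) + ((d : ℝ) - n - 2 * ((s + 1 : ℕ) : ℝ)) ≠ 0 := by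
      rw [show (n : ℝ) + ((d : ℝ) - n - 2 * ((s + 1 : ℕ) : ℝ)) = (((d : ℤ) - 2 * (s + 1) : ℤ) : ℝ)
        by push_cast; ring]
      exact Int.cast_ne_zero.2 (by obtain ⟨r, rfl⟩ := hd; omega)
    have hpos : ∀ m ≤ s, ∀ p : MvPolynomial (Fin n) ℝ, p.IsHomogeneous (m + 1) →
        (fun x : ℝⁿ => eval (⇑x) p * ‖x‖ ^ ((d : ℝ) - n - 2 * ((s + 1 : ℕ) : ℝ))) ∈
          derivSpan {0}ᶜ (fun y : ℝⁿ => ‖y‖ ^ (-((n : ℝ) - d))) := fun m hm p hp => by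
      rw [show (d : ℝ) - n - 2 * ((s + 1 : ℕ) : ℝ) = (d - n - 2 * s) - 2 by push_cast; ring]
      exact eval_mul_norm_rpow_mem_derivSpan_of_isHomogeneous_succ hg ha hp (ih m hm)
        (ih (m - 1) (by omega))
    intro m hm p hp
    cases m with
    | zero =>
      exact eval_mul_mem_derivSpan_of_isHomogeneous_zero hp <|
        norm_rpow_mem_derivSpan_of_coord_mul hg hb fun j => hpos 0 s.zero_le _ (isHomogeneous_X ℝ j)
    | succ m => exact hpos m (by omega) p hp

theorem monomial_riesz_in_span_of_derivs_general
    (n d : ℕ) (hdn : d < n) (hdodd : Odd d)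
    (m k : ℕ) (i : Fin m → Fin n) :
    (fun x : {x : EuclideanSpace ℝ (Fin n) // x ≠ 0} =>
        (∏ t : Fin m, (x : EuclideanSpace ℝ (Fin n)) (i t)) *
          ‖(x : EuclideanSpace ℝ (Fin n))‖ ^
            (-(2 * (m : ℝ) + 2 * (k : ℝ) + (n : ℝ) - (d : ℝ)))) ∈
      Submodule.span ℝ
        {g : {x : EuclideanSpace ℝ (Fin n) // x ≠ 0} → ℝ |
          ∃ L : List (Fin n),
            g = fun x : {x : EuclideanSpace ℝ (Fin n) // x ≠ 0} =>
              iterPartialDeriv n L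
                (fun y : EuclideanSpace ℝ (Fin n) => ‖y‖ ^ (-((n : ℝ) - (d : ℝ)))) x.1} := by
  have hp : (∏ t, X (i t) : MvPolynomial (Fin n) ℝ).IsHomogeneous m := by
    simpa using IsHomogeneous.prod Finset.univ (fun t => X (i t)) (fun _ => 1)
      fun t _ => isHomogeneous_X ℝ (i t)
  have hmonomial : ∀ x : EuclideanSpace ℝ (Fin n),
      (∏ t, x (i t)) * ‖x‖ ^ (-(2 * (m : ℝ) + 2 * k + n - d)) =
        eval (⇑x) (∏ t, X (i t)) * ‖x‖ ^ ((d : ℝ) - n - 2 * ((m + k : ℕ) : ℝ)) := fun x => by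
    simp only [map_prod, eval_X]
    push_cast
    ring_nf
  simp only [hmonomial]
  exact mem_derivSpan_iff.1 <|
    eval_mul_norm_rpow_mem_derivSpan_riesz hdn hdodd (m + k) m (by omega) _ hp

/-- **Derivatives of the Riesz kernel span the inverted monomial multiples, `d` odd.**
For `0 < d < n` odd, every function `x ↦ x_{i₁} ⋯ x_{i_m} / |x|^{2m + 2k + n - d}` on
`ℝⁿ ∖ {0}` is a finite ℝ-linear combination of iterated partial derivatives of
`x ↦ |x|^{-(n-d)}`. -/
theorem monomial_riesz_in_span_of_derivs
    (n d : ℕ) (hn : 2 ≤ n) (hd0 : 0 < d) (hdn : d < n) (hdodd : Odd d)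
    (m k : ℕ) (i : Fin m → Fin n) :
    (fun x : {x : EuclideanSpace ℝ (Fin n) // x ≠ 0} =>
        (∏ t : Fin m, (x : EuclideanSpace ℝ (Fin n)) (i t)) *
          ‖(x : EuclideanSpace ℝ (Fin n))‖ ^
            (-(2 * (m : ℝ) + 2 * (k : ℝ) + (n : ℝ) - (d : ℝ)))) ∈
      Submodule.span ℝ
        {g : {x : EuclideanSpace ℝ (Fin n) // x ≠ 0} → ℝ |
          ∃ L : List (Fin n),
            g = fun x : {x : EuclideanSpace ℝ (Fin n) // x ≠ 0} =>
              iterPartialDeriv n L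
                (fun y : EuclideanSpace ℝ (Fin n) => ‖y‖ ^ (-((n : ℝ) - (d : ℝ)))) x.1} :=
  monomial_riesz_in_span_of_derivs_general n d hdn hdodd m k i
end

section
/- Let 0 < a < b < ∞ and let f : ℝ → ℝ be a smooth function whose support is a compact subset of the open interval (a, b). Suppose that for some nonnegative integer k, ∫_a^b f(r) (1 − s²/r²)^{(2k−1)/2} dr = 0 for all s ∈ [0, a). Then f is identically zero. -/
/-!
Expanding `(1 - t / r²) ^ α` in its binomial series and integrating termwise, the hypothesis says
that the power series `∑ₙ (α choose n) (-t)ⁿ Mₙ`, with moments `Mₙ = ∫ f(r) r⁻²ⁿ dr`, vanishes for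
`0 ≤ t < a²`; hence all of its coefficients vanish. For `α = k - 1/2` the binomial coefficients
are nonzero, so every moment `Mₙ` vanishes. Since `r ↦ r⁻²` separates the points of `[a, b]`,
Stone–Weierstrass approximates `f` uniformly by polynomials in `r⁻²`, which gives `∫ f² = 0`.
-/

open Set Filter Topology Polynomial MeasureTheory

theorem Ring.choose_ne_zero_of_forall_ne_natCast {𝕂 : Type*} [Field 𝕂] [CharZero 𝕂] {a : 𝕂}
    (ha : ∀ m : ℕ, a ≠ m) (n : ℕ) : Ring.choose a n ≠ 0 := by
  have hpoch : (descPochhammer ℤ n).smeval a = ∏ j ∈ Finset.range n, (a - j) := by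
    rw [← aeval_eq_smeval, aeval_def, eval₂_eq_eval_map, descPochhammer_map,
      descPochhammer_eval_eq_prod_range]
  rw [Ring.choose_eq_smul, hpoch, smul_eq_mul]
  exact mul_ne_zero (by simp [Nat.factorial_ne_zero])
    (Finset.prod_ne_zero_iff.mpr fun j _ => sub_ne_zero.mpr (ha j))

theorem Real.hasSum_choose_mul_pow (α : ℝ) {x : ℝ} (hx : |x| < 1) :
    HasSum (fun n => Ring.choose α n * x ^ n) ((1 + x) ^ α) := by
  have hmem : x ∈ Metric.eball (0 : ℝ) 1 := by
    rwa [Metric.mem_eball, edist_zero_right, ← ofReal_norm, ENNReal.ofReal_lt_one]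
  simpa [binomialSeries, mul_comm] using
    (Real.one_add_rpow_hasFPowerSeriesOnBall_zero (a := α)).hasSum hmem

theorem Real.summable_abs_choose_mul_pow (α : ℝ) {ρ : ℝ} (hρ₀ : 0 ≤ ρ) (hρ₁ : ρ < 1) :
    Summable (fun n => |Ring.choose α n| * ρ ^ n) := by
  have hρ : (ρ.toNNReal : ENNReal) < (binomialSeries ℝ α).radius :=
    lt_of_lt_of_le (by simpa using hρ₁) binomialSeries_radius_ge_one
  simpa [binomialSeries, hρ₀] using (binomialSeries ℝ α).summable_norm_mul_pow hρ

theorem hasSum_integral_mul_one_sub_div_sq_rpow (α : ℝ) {a b t : ℝ} {f : ℝ → ℝ}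
    (ha : 0 < a) (hab : a ≤ b) (hf : ContinuousOn f (Icc a b)) (ht₀ : 0 ≤ t) (hta : t < a ^ 2) :
    HasSum (fun n => Ring.choose α n * (-1) ^ n * (∫ r in a..b, f r * ((r ^ 2)⁻¹) ^ n) * t ^ n)
      (∫ r in a..b, f r * (1 - t / r ^ 2) ^ α) := by
  obtain ⟨C, hC⟩ := isCompact_Icc.exists_bound_of_continuousOn hf
  have hr₀ : ∀ r ∈ Icc a b, 0 < r := fun r hr => ha.trans_le hr.1
  have hratio : ∀ r ∈ Icc a b, |-(t / r ^ 2)| < 1 := fun r hr => by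
    rw [abs_neg, abs_of_nonneg (by positivity), div_lt_one (by positivity [hr₀ r hr])]
    nlinarith [hr.1]
  let F : ℕ → ℝ → ℝ := fun n r => Ring.choose α n * (-(t / r ^ 2)) ^ n * f r
  have hF : ∀ n, ∫ r in a..b, F n r =
      Ring.choose α n * (-1) ^ n * (∫ r in a..b, f r * ((r ^ 2)⁻¹) ^ n) * t ^ n := fun n => by
    rw [← intervalIntegral.integral_const_mul, ← intervalIntegral.integral_mul_const]
    congr 1 with r
    simp only [F]
    ring
  simp_rw [← hF]
  refine intervalIntegral.hasSum_integral_of_dominated_convergence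
    (fun n _ => |Ring.choose α n| * (t / a ^ 2) ^ n * C) (fun n => ?_) (fun n => ?_) ?_ ?_ ?_
  · have : ContinuousOn (F n) (Icc a b) :=
      continuousOn_const.mul ((((continuousOn_const.div (continuousOn_pow 2)
        fun r hr => (pow_pos (hr₀ r hr) 2).ne').neg).pow n)) |>.mul hf
    exact (this.mono (uIoc_subset_uIcc.trans (uIcc_of_le hab).subset)).aestronglyMeasurable
      measurableSet_uIoc
  · refine Eventually.of_forall fun r hr => ?_
    rw [uIoc_of_le hab] at hr
    have hr' : r ∈ Icc a b := Ioc_subset_Icc_self hr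
    simp only [F, norm_mul, norm_pow, Real.norm_eq_abs, abs_neg,
      abs_of_nonneg (by positivity : 0 ≤ t / r ^ 2)]
    gcongr
    · exact hr.1.le
    · simpa using hC r hr'
  · have hρ : t / a ^ 2 < 1 := (div_lt_one (by positivity)).mpr hta
    exact Eventually.of_forall fun _ _ =>
      (Real.summable_abs_choose_mul_pow α (by positivity) hρ).mul_right C
  · exact intervalIntegrable_const
  · refine Eventually.of_forall fun r hr => ?_
    rw [uIoc_of_le hab] at hr
    simpa [F, sub_eq_add_neg, mul_comm (f r)] using
      (Real.hasSum_choose_mul_pow α (hratio r (Ioc_subset_Icc_self hr))).mul_right (f r)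

theorem eq_zero_of_hasSum_mul_pow_eq_zero {c : ℕ → ℝ} {ε : ℝ} (hε : 0 < ε)
    (h : ∀ t ∈ Ioo 0 ε, HasSum (fun n => c n * t ^ n) 0) : c = 0 := by
  set p := FormalMultilinearSeries.ofScalars ℝ c
  have hp : ∀ t, (fun n => p n fun _ => t) = fun n => c n * t ^ n := fun t => by
    simp [p, mul_comm]
  have hrad : 0 < p.radius := by
    have hsum := (h (ε / 2) ⟨by positivity, by linarith⟩).summable
    refine lt_of_lt_of_le ?_ (p.le_radius_of_tendsto (r := (ε / 2).toNNReal) (l := 0) ?_)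
    · simpa using hε
    · simpa [p, abs_of_pos hε, max_eq_left (half_pos hε).le] using hsum.tendsto_atTop_zero.norm
  have hps : HasFPowerSeriesAt p.sum p 0 := (p.hasFPowerSeriesOnBall hrad).hasFPowerSeriesAt
  have hzero : ∀ᶠ t in 𝓝[>] 0, p.sum t = 0 :=
    eventually_of_mem (Ioo_mem_nhdsGT hε) fun t ht => by
      rw [FormalMultilinearSeries.sum, hp, (h t ht).tsum_eq]
  rw [← FormalMultilinearSeries.ofScalars_series_eq_zero (E := ℝ), ← hps.locally_zero_iff,
    ← hps.analyticAt.frequently_zero_iff_eventually_zero]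
  exact hzero.frequently.filter_mono (nhdsGT_le_nhdsNE 0)

theorem exists_polynomial_near_comp_of_injOn {α : Type*} [TopologicalSpace α] {s : Set α}
    (hs : IsCompact s) {f g : α → ℝ} (hf : ContinuousOn f s) (hg : ContinuousOn g s)
    (hinj : InjOn g s) {ε : ℝ} (hε : 0 < ε) :
    ∃ q : ℝ[X], ∀ x ∈ s, |f x - q.eval (g x)| < ε := by
  have := isCompact_iff_compactSpace.mp hs
  let G : C(s, ℝ) := ⟨s.domRestrict g, hg.domRestrict⟩
  have hsep : (Algebra.adjoin ℝ {G}).SeparatesPoints := fun x y hxy =>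
    ⟨G, ⟨G, Algebra.subset_adjoin rfl, rfl⟩, fun h => hxy (Subtype.ext (hinj x.2 y.2 h))⟩
  obtain ⟨⟨_, hmem⟩, hnear⟩ :=
    ContinuousMap.exists_mem_subalgebra_near_continuous_of_separatesPoints _ hsep
      (s.domRestrict f) hf.domRestrict ε hε
  rw [Algebra.adjoin_singleton_eq_range_aeval] at hmem
  obtain ⟨q, rfl⟩ := hmem
  refine ⟨q, fun x hx => ?_⟩
  have := hnear ⟨x, hx⟩
  rw [Real.norm_eq_abs, abs_sub_comm] at this
  convert this using 3
  · rfl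
  · exact (aeval_continuousMap_apply q G ⟨x, hx⟩).symm

theorem integral_mul_self_eq_zero_of_integral_mul_pow_eq_zero {a b : ℝ} (hab : a ≤ b)
    {f g : ℝ → ℝ} (hf : ContinuousOn f (Icc a b)) (hg : ContinuousOn g (Icc a b))
    (hinj : InjOn g (Icc a b)) (h : ∀ n : ℕ, ∫ x in a..b, f x * g x ^ n = 0) :
    ∫ x in a..b, f x * f x = 0 := by
  have hint : ∀ φ : ℝ → ℝ, ContinuousOn φ (Icc a b) → IntervalIntegrable φ volume a b :=
    fun φ hφ => hφ.intervalIntegrable_of_Icc hab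
  have hpoly : ∀ q : ℝ[X], ∫ x in a..b, f x * q.eval (g x) = 0 := by
    intro q
    simp_rw [eval_eq_sum_range, Finset.mul_sum, mul_left_comm (f _)]
    rw [intervalIntegral.integral_finsetSum fun i _ => hint _ (by fun_prop)]
    exact Finset.sum_eq_zero fun i _ => by rw [intervalIntegral.integral_const_mul, h i, mul_zero]
  obtain ⟨C, hC⟩ := isCompact_Icc.exists_bound_of_continuousOn hf
  have hC₀ : 0 ≤ C := (norm_nonneg _).trans (hC a (left_mem_Icc.mpr hab))
  have hIoc : uIoc a b ⊆ Icc a b := by rw [uIoc_of_le hab]; exact Ioc_subset_Icc_self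
  have hle : ∀ ε > 0, |∫ x in a..b, f x * f x| ≤ C * (b - a) * ε := by
    intro ε hε
    obtain ⟨q, hq⟩ := exists_polynomial_near_comp_of_injOn isCompact_Icc hf hg hinj hε
    have hI : ∫ x in a..b, f x * f x = ∫ x in a..b, f x * (f x - q.eval (g x)) := by
      simp_rw [mul_sub]
      rw [intervalIntegral.integral_sub (hint _ (by fun_prop)) (hint _ (by fun_prop)), hpoly,
        sub_zero]
    have hbound : ∀ x ∈ uIoc a b, ‖f x * (f x - q.eval (g x))‖ ≤ C * ε := fun x hx => by
      rw [norm_mul]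
      exact mul_le_mul (hC x (hIoc hx)) (hq x (hIoc hx)).le (norm_nonneg _) hC₀
    have := intervalIntegral.norm_integral_le_of_norm_le_const hbound
    rwa [← hI, Real.norm_eq_abs, abs_of_nonneg (sub_nonneg.mpr hab), mul_right_comm] at this
  have hlim : Tendsto (fun ε => C * (b - a) * ε) (𝓝[>] 0) (𝓝 0) := by
    simpa using ((continuous_const_mul (C * (b - a))).tendsto 0).mono_left nhdsWithin_le_nhds
  exact abs_nonpos_iff.mp (ge_of_tendsto hlim (eventually_nhdsWithin_of_forall hle))

theorem eqOn_zero_of_integral_mul_pow_eq_zero {a b : ℝ} (hab : a < b) {f g : ℝ → ℝ}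
    (hf : ContinuousOn f (Icc a b)) (hg : ContinuousOn g (Icc a b)) (hinj : InjOn g (Icc a b))
    (h : ∀ n : ℕ, ∫ x in a..b, f x * g x ^ n = 0) : EqOn f 0 (Icc a b) := by
  have hae : (fun x => f x * f x) =ᵐ[volume.restrict (Icc a b)] 0 := by
    rw [← Measure.restrict_congr_set Ioc_ae_eq_Icc]
    exact (intervalIntegral.integral_eq_zero_iff_of_le_of_nonneg_ae hab.le
      (Eventually.of_forall fun x => mul_self_nonneg (f x))
      ((hf.mul hf).intervalIntegrable_of_Icc hab.le)).mp
      (integral_mul_self_eq_zero_of_integral_mul_pow_eq_zero hab.le hf hg hinj h)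
  exact fun x hx => mul_self_eq_zero.mp
    (Measure.eqOn_Icc_of_ae_eq volume hab.ne hae (hf.mul hf) continuousOn_const hx)

theorem density_lemma_general
    (a b : ℝ) (ha : 0 < a) (hab : a < b)
    (f : ℝ → ℝ) (hf : ContDiff ℝ (⊤ : ℕ∞) f)
    (hsupp : tsupport f ⊆ Set.Ioo a b)
    (k : ℕ)
    (hint : ∀ s : ℝ, 0 ≤ s → s < a →
      ∫ r in a..b, f r * (1 - s ^ 2 / r ^ 2) ^ ((2 * (k : ℝ) - 1) / 2) = 0) :
    f = 0 := by
  set α : ℝ := (2 * (k : ℝ) - 1) / 2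
  have hα : ∀ m : ℕ, α ≠ m := fun m h => by
    have h' : (2 * k : ℝ) - 1 = 2 * m := by linarith [(div_eq_iff (two_ne_zero' ℝ)).mp h]
    have : (2 * k : ℤ) - 1 = 2 * m := by exact_mod_cast h'
    omega
  have hfc : ContinuousOn f (Icc a b) := hf.continuous.continuousOn
  have hcoeff :
      (fun n => Ring.choose α n * (-1) ^ n * ∫ r in a..b, f r * ((r ^ 2)⁻¹) ^ n) = 0 := by
    refine eq_zero_of_hasSum_mul_pow_eq_zero (pow_pos ha 2) fun t ht => ?_
    have h0 : ∫ r in a..b, f r * (1 - t / r ^ 2) ^ α = 0 := by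
      simpa [Real.sq_sqrt ht.1.le] using
        hint (√t) (Real.sqrt_nonneg t) ((Real.sqrt_lt' ha).mpr ht.2)
    simpa [h0] using hasSum_integral_mul_one_sub_div_sq_rpow α ha hab.le hfc ht.1.le ht.2
  have hinv : InjOn (fun r : ℝ => (r ^ 2)⁻¹) (Icc a b) := fun x hx y hy h =>
    (pow_left_inj₀ (ha.le.trans hx.1) (ha.le.trans hy.1) two_ne_zero).mp (inv_inj.mp h)
  have hzero := eqOn_zero_of_integral_mul_pow_eq_zero hab hfc
    ((continuousOn_pow 2).inv₀ fun r hr => (pow_pos (ha.trans_le hr.1) 2).ne') hinv fun n => by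
      simpa [Ring.choose_ne_zero_of_forall_ne_natCast hα n] using congrFun hcoeff n
  funext x
  by_cases hx : x ∈ Icc a b
  · exact hzero hx
  · exact image_eq_zero_of_notMem_tsupport fun h => hx (Ioo_subset_Icc_self (hsupp h))

/-- **A density lemma.** Let `0 < a < b` and let `f : ℝ → ℝ` be smooth with support a compact
subset of `(a, b)`. If for some nonnegative integer `k`,
`∫_a^b f(r) (1 - s²/r²)^{(2k-1)/2} dr = 0` for all `s ∈ [0, a)`, then `f ≡ 0`. -/
theorem density_lemma
    (a b : ℝ) (ha : 0 < a) (hab : a < b)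
    (f : ℝ → ℝ) (hf : ContDiff ℝ (⊤ : ℕ∞) f)
    (hsupp : tsupport f ⊆ Set.Ioo a b) (hcomp : IsCompact (tsupport f))
    (k : ℕ)
    (hint : ∀ s : ℝ, 0 ≤ s → s < a →
      ∫ r in a..b, f r * (1 - s ^ 2 / r ^ 2) ^ ((2 * (k : ℝ) - 1) / 2) = 0) :
    f = 0 :=
  density_lemma_general a b ha hab f hf hsupp k hint
end

section
/- Let n ≥ 1 and let u : ℝⁿ → ℝ be a smooth compactly supported function that is not identically zero. Then for every integer k ≥ 0, the iterated Laplacian Δ^k u is not identically zero (i.e., u is not polyharmonic of any order). -/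
open MeasureTheory

/-- The Laplacian `Δ g = Σᵢ ∂²g/∂xᵢ²` of a function `g : ℝⁿ → ℝ`. -/
noncomputable def laplacian' (n : ℕ) (g : EuclideanSpace ℝ (Fin n) → ℝ) :
    EuclideanSpace ℝ (Fin n) → ℝ :=
  fun x => ∑ i : Fin n,
    fderiv ℝ (fun y => fderiv ℝ g y (EuclideanSpace.single i 1)) x (EuclideanSpace.single i 1)

/-!
If `Δᵏ⁺¹ u = 0`, apply Green's identity `∫ g Δg = -∫ |∇g|²` to the smooth compactly supported
function `g = Δᵏ u`: it forces `∇g = 0`, so `g` is constant, and a compactly supported constant on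
the noncompact space `ℝⁿ`, `n ≥ 1`, vanishes. Induction on `k` concludes.
-/

open scoped ContDiff

theorem HasCompactSupport.eq_zero_of_fderiv_eq_zero {E F : Type*} [NormedAddCommGroup E]
    [NormedSpace ℝ E] [NormedAddCommGroup F] [NormedSpace ℝ F] [Nontrivial E] {g : E → F}
    (hg : Differentiable ℝ g) (hgc : HasCompactSupport g) (hg' : ∀ x, fderiv ℝ g x = 0) :
    g = 0 := by
  obtain ⟨x₀, hx₀⟩ : ∃ x, x ∉ tsupport g := by
    by_contra! h
    exact noncompact_univ E (Set.eq_univ_of_forall h ▸ hgc)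
  funext x
  rw [is_const_of_fderiv_eq_zero hg hg' x x₀, image_eq_zero_of_notMem_tsupport hx₀, Pi.zero_apply]

theorem Continuous.eq_zero_of_integral_mul_self_eq_zero {X : Type*} [TopologicalSpace X]
    [MeasurableSpace X] [OpensMeasurableSpace X] {μ : Measure X} [μ.IsOpenPosMeasure]
    [IsFiniteMeasureOnCompacts μ] {f : X → ℝ} (hf : Continuous f) (hfc : HasCompactSupport f)
    (h : ∫ x, f x * f x ∂μ = 0) : f = 0 := by
  funext x
  by_contra hx
  exact h.not_gt <| (hf.mul hf).integral_pos_of_hasCompactSupport_nonneg_nonzero hfc.mul_left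
    (fun x => mul_self_nonneg (f x)) (mul_self_ne_zero.2 hx)

namespace EuclideanSpace

variable {n : ℕ}

noncomputable def partialDeriv (i : Fin n) (g : EuclideanSpace ℝ (Fin n) → ℝ) :
    EuclideanSpace ℝ (Fin n) → ℝ :=
  fun x => fderiv ℝ g x (single i 1)

theorem laplacian'_apply (g : EuclideanSpace ℝ (Fin n) → ℝ) (x : EuclideanSpace ℝ (Fin n)) :
    laplacian' n g x = ∑ i, partialDeriv i (partialDeriv i g) x :=
  rfl

theorem fderiv_eq_zero_of_partialDeriv_eq_zero {g : EuclideanSpace ℝ (Fin n) → ℝ}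
    {x : EuclideanSpace ℝ (Fin n)} (h : ∀ i, partialDeriv i g x = 0) : fderiv ℝ g x = 0 :=
  ContinuousLinearMap.coe_injective <|
    (basisFun (Fin n) ℝ).toBasis.ext fun i => by simpa [partialDeriv] using h i

theorem _root_.ContDiff.partialDeriv {g : EuclideanSpace ℝ (Fin n) → ℝ} (hg : ContDiff ℝ ∞ g)
    (i : Fin n) : ContDiff ℝ ∞ (partialDeriv i g) :=
  (hg.fderiv_right le_rfl).clm_apply contDiff_const

theorem _root_.HasCompactSupport.partialDeriv {g : EuclideanSpace ℝ (Fin n) → ℝ}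
    (hg : HasCompactSupport g) (i : Fin n) : HasCompactSupport (partialDeriv i g) :=
  hg.fderiv_apply ℝ _

theorem _root_.ContDiff.laplacian' {g : EuclideanSpace ℝ (Fin n) → ℝ} (hg : ContDiff ℝ ∞ g) :
    ContDiff ℝ ∞ (laplacian' n g) := by
  simp_rw [funext (laplacian'_apply g)]
  exact ContDiff.sum fun i _ => (hg.partialDeriv i).partialDeriv i

theorem _root_.HasCompactSupport.laplacian' {g : EuclideanSpace ℝ (Fin n) → ℝ}
    (hg : HasCompactSupport g) : HasCompactSupport (laplacian' n g) := by
  simp_rw [funext (laplacian'_apply g), ← Finset.sum_apply]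
  exact .finset_sum fun i _ => (hg.partialDeriv i).partialDeriv i

/-- Green's first identity. -/
theorem integral_mul_laplacian' {g : EuclideanSpace ℝ (Fin n) → ℝ} (hg : ContDiff ℝ ∞ g)
    (hgc : HasCompactSupport g) :
    ∫ x, g x * laplacian' n g x = -∑ i, ∫ x, partialDeriv i g x * partialDeriv i g x := by
  have integrable {a b : EuclideanSpace ℝ (Fin n) → ℝ} (ha : Continuous a) (hb : Continuous b)
      (hbc : HasCompactSupport b) : Integrable (fun x => a x * b x) :=
    (ha.mul hb).integrable_of_hasCompactSupport hbc.mul_left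
  simp_rw [laplacian'_apply, Finset.mul_sum]
  rw [integral_finsetSum _ fun i _ => integrable hg.continuous
    ((hg.partialDeriv i).partialDeriv i).continuous ((hgc.partialDeriv i).partialDeriv i),
    ← Finset.sum_neg_distrib]
  refine Finset.sum_congr rfl fun i _ => ?_
  exact integral_mul_fderiv_eq_neg_fderiv_mul_of_integrable
    (integrable (hg.partialDeriv i).continuous (hg.partialDeriv i).continuous
      (hgc.partialDeriv i))
    (integrable hg.continuous ((hg.partialDeriv i).partialDeriv i).continuous
      ((hgc.partialDeriv i).partialDeriv i))
    (integrable hg.continuous (hg.partialDeriv i).continuous (hgc.partialDeriv i))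
    (fun x _ => (hg.differentiable (by simp)).differentiableAt)
    (fun x _ => ((hg.partialDeriv i).differentiable (by simp)).differentiableAt)

theorem eq_zero_of_laplacian'_eq_zero (hn : 1 ≤ n) {g : EuclideanSpace ℝ (Fin n) → ℝ}
    (hg : ContDiff ℝ ∞ g) (hgc : HasCompactSupport g) (hΔg : laplacian' n g = 0) : g = 0 := by
  have hsum : ∑ i, ∫ x, partialDeriv i g x * partialDeriv i g x = 0 := by
    simpa [hΔg] using (integral_mul_laplacian' hg hgc).symm
  have hpartial (i : Fin n) : partialDeriv i g = 0 :=
    (hg.partialDeriv i).continuous.eq_zero_of_integral_mul_self_eq_zero (hgc.partialDeriv i) <|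
      (Finset.sum_eq_zero_iff_of_nonneg fun j _ => integral_nonneg fun x => mul_self_nonneg _).1
        hsum i (Finset.mem_univ i)
  have : Nontrivial (EuclideanSpace ℝ (Fin n)) :=
    Module.nontrivial_of_finrank_pos (R := ℝ) (by rwa [finrank_euclideanSpace_fin])
  exact hgc.eq_zero_of_fderiv_eq_zero (hg.differentiable (by simp))
    fun x => fderiv_eq_zero_of_partialDeriv_eq_zero fun i => congrFun (hpartial i) x

end EuclideanSpace

/-- **No nonzero compactly supported smooth function is polyharmonic.**
If `u : ℝⁿ → ℝ` is smooth, compactly supported and not identically zero, then for every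
`k ≥ 0` the iterated Laplacian `Δᵏ u` is not identically zero. -/
theorem iterated_laplacian_ne_zero
    (n : ℕ) (hn : 1 ≤ n) (u : EuclideanSpace ℝ (Fin n) → ℝ)
    (hu : ContDiff ℝ (⊤ : ℕ∞) u) (huc : HasCompactSupport u) (hne : u ≠ 0) :
    ∀ k : ℕ, (laplacian' n)^[k] u ≠ 0 := by
  intro k
  induction k with
  | zero => exact hne
  | succ k ih =>
    rw [Function.iterate_succ_apply']
    exact fun hΔ => ih <| EuclideanSpace.eq_zero_of_laplacian'_eq_zero hn
      (Function.Iterate.rec _ hu (fun _ => ContDiff.laplacian') k)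
      (Function.Iterate.rec _ huc (fun _ => HasCompactSupport.laplacian') k) hΔ
end
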